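/- arXiv:2007.15431 — 2 statements merged into one kernel-verified Lean document; each statement's English description precedes it below -/
import Mathlib

section
/- Let Ω ⊆ ℝⁿ be an open bounded set, let p ≥ 2, and let σ : Ω × [0,∞) → ℝ be measurable and satisfy the upper bound in (H4) with constants σ̄, E₀ and the coercivity (H5) with constant c > 0. Let φ : ℝⁿ → ℝ be weakly differentiable with ∇φ ∈ L²(Ω) ∩ L^p(Ω), and for each ε ∈ (0,1) let u_ε : ℝⁿ → ℝ be weakly differentiable with ∇u_ε ∈ L²(Ω) ∩ L^p(Ω); let u₀ be likewise. Assume sup_{ε ∈ (0,1)} ( ‖∇u_ε‖_{L²(Ω)} + ‖∇u_ε‖_{L^p(Ω)} ) < ∞, and that for every ε ∈ (0,1) the weak-formulation identities ∫_Ω σ(x,|∇u_ε|) ∇u_ε·(∇u_ε − ∇u₀ − ε∇φ) dx = 0 and ∫_Ω σ(x,|∇u₀|) ∇u₀·(∇u_ε − ∇u₀ − ε∇φ) dx = 0 hold. Then ∇u_ε → ∇u₀ in L^p(Ω) as ε → 0⁺. (Lemma 3.1: continuity of the gradient of the solution with respect to perturbations of the boundary datum.) -/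
/-!
Write `A(x, v) = σ(x, |v|) v`. Subtracting the two weak identities gives
`∫ (A(∇u_ε) - A(∇u₀)) · (∇u_ε - ∇u₀) = ε ∫ (A(∇u_ε) - A(∇u₀)) · ∇φ`.
By (H5) the left side is at least `c ‖∇u_ε - ∇u₀‖_p^p`. Taking `a = 0` in (H5) shows `σ ≥ 0`,
so the upper bound in (H4) gives `|A(x, v)| ≤ C (|v| + |v|^(p-1))`, and Young's inequality bounds
the right side by `ε C (2|Ω| + ‖∇u_ε‖_p^p + ‖∇u₀‖_p^p + 2‖∇φ‖_p^p) = O(ε)`.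
-/

open MeasureTheory Set Filter
open scoped RealInnerProductSpace Topology

namespace Real

lemma sq_le_one_add_rpow {p a : ℝ} (hp : 2 ≤ p) (ha : 0 ≤ a) : a ^ 2 ≤ 1 + a ^ p := by
  rcases le_total a 1 with h | h
  · nlinarith [rpow_nonneg ha p]
  · have := rpow_le_rpow_of_exponent_le h hp
    rw [rpow_two] at this
    linarith

lemma mul_le_one_add_rpow_add_rpow {p a b : ℝ} (hp : 2 ≤ p) (ha : 0 ≤ a) (hb : 0 ≤ b) :
    a * b ≤ 1 + a ^ p + b ^ p := by
  nlinarith [sq_le_one_add_rpow hp ha, sq_le_one_add_rpow hp hb, sq_nonneg (a - b),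
    rpow_nonneg ha p, rpow_nonneg hb p]

lemma rpow_sub_one_mul_le_rpow_add_rpow {p a b : ℝ} (hp : 1 ≤ p) (ha : 0 ≤ a) (hb : 0 ≤ b) :
    a ^ (p - 1) * b ≤ a ^ p + b ^ p := by
  have hp' : p - 1 + 1 ≠ 0 := by linarith
  rcases le_total a b with h | h
  · calc a ^ (p - 1) * b ≤ b ^ (p - 1) * b := by gcongr
      _ = b ^ p := by rw [← rpow_add_one' hb hp', sub_add_cancel]
      _ ≤ a ^ p + b ^ p := le_add_of_nonneg_left (rpow_nonneg ha p)
  · calc a ^ (p - 1) * b ≤ a ^ (p - 1) * a := by gcongr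
      _ = a ^ p := by rw [← rpow_add_one' ha hp', sub_add_cancel]
      _ ≤ a ^ p + b ^ p := le_add_of_nonneg_right (rpow_nonneg hb p)

lemma mul_le_of_le_mul_max_rpow {s σu E₀ p r : ℝ} (hσu : 0 ≤ σu) (hE₀ : 0 < E₀) (hr : 0 < r)
    (hs : s ≤ σu * max 1 ((r / E₀) ^ (p - 2))) :
    s * r ≤ σu * (r + E₀ ^ (2 - p) * r ^ (p - 1)) := by
  have hdiv : (r / E₀) ^ (p - 2) = E₀ ^ (2 - p) * r ^ (p - 2) := by
    rw [div_rpow hr.le hE₀.le, show 2 - p = -(p - 2) by ring, rpow_neg hE₀.le]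
    ring
  have hmax : max 1 ((r / E₀) ^ (p - 2)) ≤ 1 + E₀ ^ (2 - p) * r ^ (p - 2) := by
    rw [← hdiv]
    exact max_le (le_add_of_nonneg_right (by positivity)) (le_add_of_nonneg_left zero_le_one)
  calc s * r ≤ σu * (1 + E₀ ^ (2 - p) * r ^ (p - 2)) * r := by gcongr; exact hs.trans (by gcongr)
    _ = σu * (r + E₀ ^ (2 - p) * (r ^ (p - 2) * r)) := by ring
    _ = σu * (r + E₀ ^ (2 - p) * r ^ (p - 1)) := by
      rw [← rpow_add_one hr.ne', show p - 2 + 1 = p - 1 by ring]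

end Real

section Pointwise

variable {V : Type*} [NormedAddCommGroup V] [InnerProductSpace ℝ V]

lemma abs_mul_inner_le_of_le_mul_max_rpow {s σu E₀ p : ℝ} {v w : V} (hp : 2 ≤ p)
    (hσu : 0 ≤ σu) (hE₀ : 0 < E₀) (hs₀ : v ≠ 0 → 0 ≤ s)
    (hs : v ≠ 0 → s ≤ σu * max 1 ((‖v‖ / E₀) ^ (p - 2))) :
    |s * ⟪v, w⟫| ≤ σu * (1 + E₀ ^ (2 - p)) * (1 + ‖v‖ ^ p + ‖w‖ ^ p) := by
  rcases eq_or_ne v 0 with rfl | hv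
  · simp only [inner_zero_left, mul_zero, abs_zero]
    positivity
  set a := ‖v‖
  set b := ‖w‖
  have ha : 0 < a := norm_pos_iff.2 hv
  have hb : 0 ≤ b := norm_nonneg w
  have hab := Real.mul_le_one_add_rpow_add_rpow hp ha.le hb
  have hab' := Real.rpow_sub_one_mul_le_rpow_add_rpow (by linarith : (1:ℝ) ≤ p) ha.le hb
  calc |s * ⟪v, w⟫| = s * |⟪v, w⟫| := by rw [abs_mul, abs_of_nonneg (hs₀ hv)]
    _ ≤ s * (a * b) := mul_le_mul_of_nonneg_left (abs_real_inner_le_norm v w) (hs₀ hv)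
    _ = s * a * b := (mul_assoc _ _ _).symm
    _ ≤ σu * (a + E₀ ^ (2 - p) * a ^ (p - 1)) * b :=
        mul_le_mul_of_nonneg_right (Real.mul_le_of_le_mul_max_rpow hσu hE₀ ha (hs hv)) hb
    _ = σu * (a * b + E₀ ^ (2 - p) * (a ^ (p - 1) * b)) := by ring
    _ ≤ σu * ((1 + a ^ p + b ^ p) + E₀ ^ (2 - p) * (1 + a ^ p + b ^ p)) := by
        gcongr
        linarith
    _ = σu * (1 + E₀ ^ (2 - p)) * (1 + a ^ p + b ^ p) := by ring

lemma pos_of_coercive {s : ℝ → ℝ} {c p : ℝ} (hc : 0 < c)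
    (hcoer : ∀ a b : V, c * ‖b - a‖ ^ p ≤ ⟪s ‖b‖ • b - s ‖a‖ • a, b - a⟫) {v : V} (hv : v ≠ 0) :
    0 < s ‖v‖ := by
  have h := hcoer 0 v
  simp only [sub_zero, smul_zero, real_inner_smul_left, real_inner_self_eq_norm_sq] at h
  have hv' : 0 < ‖v‖ := norm_pos_iff.2 hv
  have : 0 < c * ‖v‖ ^ p := by positivity
  nlinarith

end Pointwise

section Integral

variable {α F : Type*} [MeasurableSpace α] {μ : Measure α} [NormedAddCommGroup F]

lemma MeasureTheory.MemLp.integrable_norm_rpow_ofReal {p : ℝ} {f : α → F} (hp : 0 < p)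
    (hf : MemLp f (ENNReal.ofReal p) μ) : Integrable (fun x => ‖f x‖ ^ p) μ := by
  simpa [ENNReal.toReal_ofReal hp.le] using
    hf.integrable_norm_rpow (by simpa using hp) ENNReal.ofReal_ne_top

lemma MeasureTheory.MemLp.integral_norm_rpow_le {p M : ℝ} {f : α → F} (hp : 0 < p)
    (hf : MemLp f (ENNReal.ofReal p) μ) (hM : (eLpNorm f (ENNReal.ofReal p) μ).toReal ≤ M) :
    ∫ x, ‖f x‖ ^ p ∂μ ≤ M ^ p := by
  have hI : 0 ≤ ∫ x, ‖f x‖ ^ p ∂μ := integral_nonneg fun x => by positivity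
  rw [hf.eLpNorm_eq_integral_rpow_norm (by simpa using hp) ENNReal.ofReal_ne_top,
    ENNReal.toReal_ofReal hp.le, ENNReal.toReal_ofReal (by positivity)] at hM
  calc ∫ x, ‖f x‖ ^ p ∂μ = ((∫ x, ‖f x‖ ^ p ∂μ) ^ p⁻¹) ^ p := (Real.rpow_inv_rpow hI hp.ne').symm
    _ ≤ M ^ p := by gcongr

lemma tendsto_eLpNorm_of_integral_norm_rpow_le {ι : Type*} {l : Filter ι} {p : ℝ}
    {f : ι → α → F} {b : ι → ℝ} (hp : 0 < p) (hf : ∀ᶠ i in l, MemLp (f i) (ENNReal.ofReal p) μ)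
    (hle : ∀ᶠ i in l, ∫ x, ‖f i x‖ ^ p ∂μ ≤ b i) (hb : Tendsto b l (𝓝 0)) :
    Tendsto (fun i => eLpNorm (f i) (ENNReal.ofReal p) μ) l (𝓝 0) := by
  have hlim : Tendsto (fun i => ENNReal.ofReal (b i ^ p⁻¹)) l (𝓝 0) := by
    simpa using ENNReal.tendsto_ofReal (hb.rpow_const_nhds_zero (inv_pos.2 hp))
  refine tendsto_of_tendsto_of_tendsto_of_le_of_le' tendsto_const_nhds hlim
    (Eventually.of_forall fun _ => zero_le) ?_
  filter_upwards [hf, hle] with i hfi hi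
  rw [hfi.eLpNorm_eq_integral_rpow_norm (by simpa using hp) ENNReal.ofReal_ne_top,
    ENNReal.toReal_ofReal hp.le]
  exact ENNReal.ofReal_le_ofReal (Real.rpow_le_rpow (integral_nonneg fun x => by positivity) hi
    (by positivity))

end Integral

section Energy

variable {α V : Type*} [MeasurableSpace α] {μ : Measure α}
  [NormedAddCommGroup V] [InnerProductSpace ℝ V] {σ : α → ℝ → ℝ} {C c p : ℝ}

lemma ae_abs_mul_inner_le {σu E₀ : ℝ} (hp : 2 ≤ p) (hσu : 0 ≤ σu) (hE₀ : 0 < E₀) (hc : 0 < c)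
    (hupper : ∀ᵐ x ∂μ, ∀ E > (0:ℝ), σ x E ≤ σu * max 1 ((E / E₀) ^ (p - 2)))
    (hcoer : ∀ᵐ x ∂μ, ∀ a b : V, c * ‖b - a‖ ^ p ≤ ⟪σ x ‖b‖ • b - σ x ‖a‖ • a, b - a⟫) :
    ∀ᵐ x ∂μ, ∀ v w : V,
      |σ x ‖v‖ * ⟪v, w⟫| ≤ σu * (1 + E₀ ^ (2 - p)) * (1 + ‖v‖ ^ p + ‖w‖ ^ p) := by
  filter_upwards [hupper, hcoer] with x hux hcx v w
  exact abs_mul_inner_le_of_le_mul_max_rpow hp hσu hE₀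
    (fun hv => (pos_of_coercive hc hcx hv).le) (fun hv => hux _ (norm_pos_iff.2 hv))

variable [IsFiniteMeasure μ]

lemma integrable_mul_inner (hσ : Measurable (Function.uncurry σ))
    (hgrowth : ∀ᵐ x ∂μ, ∀ v w : V, |σ x ‖v‖ * ⟪v, w⟫| ≤ C * (1 + ‖v‖ ^ p + ‖w‖ ^ p))
    (hp : 0 < p) {v w : α → V} (hv : MemLp v (ENNReal.ofReal p) μ)
    (hw : MemLp w (ENNReal.ofReal p) μ) :
    Integrable (fun x => σ x ‖v x‖ * ⟪v x, w x⟫) μ := by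
  have hσv : AEStronglyMeasurable (fun x => σ x ‖v x‖) μ :=
    (hσ.comp_aemeasurable (aemeasurable_id.prodMk hv.1.norm.aemeasurable)).aestronglyMeasurable
  refine Integrable.mono' (((integrable_const 1).add (hv.integrable_norm_rpow_ofReal hp)).add
    (hw.integrable_norm_rpow_ofReal hp) |>.const_mul C) (hσv.mul (hv.1.inner hw.1)) ?_
  filter_upwards [hgrowth] with x hx using hx (v x) (w x)

lemma abs_integral_mul_inner_le
    (hgrowth : ∀ᵐ x ∂μ, ∀ v w : V, |σ x ‖v‖ * ⟪v, w⟫| ≤ C * (1 + ‖v‖ ^ p + ‖w‖ ^ p))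
    (hp : 0 < p) {v w : α → V} (hv : MemLp v (ENNReal.ofReal p) μ)
    (hw : MemLp w (ENNReal.ofReal p) μ) :
    |∫ x, σ x ‖v x‖ * ⟪v x, w x⟫ ∂μ|
      ≤ C * (μ.real univ + ∫ x, ‖v x‖ ^ p ∂μ + ∫ x, ‖w x‖ ^ p ∂μ) := by
  have hIv := hv.integrable_norm_rpow_ofReal hp
  have hIw := hw.integrable_norm_rpow_ofReal hp
  calc |∫ x, σ x ‖v x‖ * ⟪v x, w x⟫ ∂μ| ≤ ∫ x, |σ x ‖v x‖ * ⟪v x, w x⟫| ∂μ :=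
        abs_integral_le_integral_abs
    _ ≤ ∫ x, C * (1 + ‖v x‖ ^ p + ‖w x‖ ^ p) ∂μ := by
        refine integral_mono_of_nonneg (Eventually.of_forall fun x => abs_nonneg _)
          (((integrable_const 1).add hIv).add hIw |>.const_mul C) ?_
        filter_upwards [hgrowth] with x hx using hx (v x) (w x)
    _ = C * (μ.real univ + ∫ x, ‖v x‖ ^ p ∂μ + ∫ x, ‖w x‖ ^ p ∂μ) := by
        have hI1v : Integrable (fun x => 1 + ‖v x‖ ^ p) μ := (integrable_const 1).add hIv
        rw [integral_const_mul, integral_add hI1v hIw, integral_add (integrable_const 1) hIv,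
          integral_const, smul_eq_mul, mul_one]

lemma integral_mul_inner_sub_smul (hσ : Measurable (Function.uncurry σ))
    (hgrowth : ∀ᵐ x ∂μ, ∀ v w : V, |σ x ‖v‖ * ⟪v, w⟫| ≤ C * (1 + ‖v‖ ^ p + ‖w‖ ^ p))
    (hp : 0 < p) {v w h : α → V} (hv : MemLp v (ENNReal.ofReal p) μ)
    (hw : MemLp w (ENNReal.ofReal p) μ) (hh : MemLp h (ENNReal.ofReal p) μ) (ε : ℝ) :
    ∫ x, σ x ‖v x‖ * ⟪v x, w x - ε • h x⟫ ∂μ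
      = ∫ x, σ x ‖v x‖ * ⟪v x, w x⟫ ∂μ - ε * ∫ x, σ x ‖v x‖ * ⟪v x, h x⟫ ∂μ := by
  rw [← integral_const_mul, ← integral_sub (integrable_mul_inner hσ hgrowth hp hv hw)
    ((integrable_mul_inner hσ hgrowth hp hv hh).const_mul ε)]
  congr 1 with x
  rw [inner_sub_right, real_inner_smul_right]
  ring

lemma mul_integral_norm_sub_rpow_le (hσ : Measurable (Function.uncurry σ))
    (hgrowth : ∀ᵐ x ∂μ, ∀ v w : V, |σ x ‖v‖ * ⟪v, w⟫| ≤ C * (1 + ‖v‖ ^ p + ‖w‖ ^ p))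
    (hp : 0 < p)
    (hcoer : ∀ᵐ x ∂μ, ∀ a b : V, c * ‖b - a‖ ^ p ≤ ⟪σ x ‖b‖ • b - σ x ‖a‖ • a, b - a⟫)
    {g g₀ : α → V} (hg : MemLp g (ENNReal.ofReal p) μ) (hg₀ : MemLp g₀ (ENNReal.ofReal p) μ) :
    c * ∫ x, ‖g x - g₀ x‖ ^ p ∂μ ≤
      ∫ x, σ x ‖g x‖ * ⟪g x, g x - g₀ x⟫ ∂μ - ∫ x, σ x ‖g₀ x‖ * ⟪g₀ x, g x - g₀ x⟫ ∂μ := by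
  have hd : MemLp (fun x => g x - g₀ x) (ENNReal.ofReal p) μ := hg.sub hg₀
  rw [← integral_const_mul, ← integral_sub (integrable_mul_inner hσ hgrowth hp hg hd)
    (integrable_mul_inner hσ hgrowth hp hg₀ hd)]
  refine integral_mono_ae ((hd.integrable_norm_rpow_ofReal hp).const_mul c)
    ((integrable_mul_inner hσ hgrowth hp hg hd).sub (integrable_mul_inner hσ hgrowth hp hg₀ hd)) ?_
  filter_upwards [hcoer] with x hx
  simpa only [inner_sub_left, real_inner_smul_left] using hx (g₀ x) (g x)

theorem mul_integral_norm_sub_rpow_le_of_weak (hσ : Measurable (Function.uncurry σ))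
    (hgrowth : ∀ᵐ x ∂μ, ∀ v w : V, |σ x ‖v‖ * ⟪v, w⟫| ≤ C * (1 + ‖v‖ ^ p + ‖w‖ ^ p))
    (hp : 0 < p)
    (hcoer : ∀ᵐ x ∂μ, ∀ a b : V, c * ‖b - a‖ ^ p ≤ ⟪σ x ‖b‖ • b - σ x ‖a‖ • a, b - a⟫)
    {g g₀ h : α → V} (hg : MemLp g (ENNReal.ofReal p) μ) (hg₀ : MemLp g₀ (ENNReal.ofReal p) μ)
    (hh : MemLp h (ENNReal.ofReal p) μ) {ε : ℝ} (hε : 0 ≤ ε)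
    (hweak : ∫ x, σ x ‖g x‖ * ⟪g x, g x - g₀ x - ε • h x⟫ ∂μ = 0)
    (hweak₀ : ∫ x, σ x ‖g₀ x‖ * ⟪g₀ x, g x - g₀ x - ε • h x⟫ ∂μ = 0) :
    c * ∫ x, ‖g x - g₀ x‖ ^ p ∂μ ≤ ε * (C * (2 * μ.real univ + ∫ x, ‖g x‖ ^ p ∂μ
      + ∫ x, ‖g₀ x‖ ^ p ∂μ + 2 * ∫ x, ‖h x‖ ^ p ∂μ)) := by
  have hd : MemLp (fun x => g x - g₀ x) (ENNReal.ofReal p) μ := hg.sub hg₀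
  rw [integral_mul_inner_sub_smul hσ hgrowth hp hg hd hh] at hweak
  rw [integral_mul_inner_sub_smul hσ hgrowth hp hg₀ hd hh] at hweak₀
  have hJ := abs_le.1 (abs_integral_mul_inner_le hgrowth hp hg hh)
  have hJ₀ := abs_le.1 (abs_integral_mul_inner_le hgrowth hp hg₀ hh)
  calc c * ∫ x, ‖g x - g₀ x‖ ^ p ∂μ
      ≤ ∫ x, σ x ‖g x‖ * ⟪g x, g x - g₀ x⟫ ∂μ - ∫ x, σ x ‖g₀ x‖ * ⟪g₀ x, g x - g₀ x⟫ ∂μ :=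
        mul_integral_norm_sub_rpow_le hσ hgrowth hp hcoer hg hg₀
    _ = ε * (∫ x, σ x ‖g x‖ * ⟪g x, h x⟫ ∂μ - ∫ x, σ x ‖g₀ x‖ * ⟪g₀ x, h x⟫ ∂μ) := by
        linarith
    _ ≤ _ := by
        gcongr
        linarith

end Energy

theorem gradient_continuity_wrt_boundary_data_general
    {n : ℕ} (Ω : Set (EuclideanSpace ℝ (Fin n)))
    (hΩb : Bornology.IsBounded Ω)
    (p : ℝ) (hp : 2 ≤ p)
    (σ : EuclideanSpace ℝ (Fin n) → ℝ → ℝ)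
    (hσmeas : Measurable (Function.uncurry σ))
    -- upper bound in (H4)
    (σu E₀ : ℝ) (hσu : 0 < σu) (hE₀ : 0 < E₀)
    (hupper : ∀ᵐ x ∂(volume.restrict Ω), ∀ E > (0:ℝ),
      σ x E ≤ σu * max 1 ((E / E₀) ^ (p - 2)))
    -- coercivity (H5)
    (c : ℝ) (hc : 0 < c)
    (hcoer : ∀ᵐ x ∂(volume.restrict Ω), ∀ a b : EuclideanSpace ℝ (Fin n),
      c * ‖b - a‖ ^ p ≤ ⟪σ x ‖b‖ • b - σ x ‖a‖ • a, b - a⟫)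
    -- the direction φ, weakly differentiable with gradient in L²(Ω) ∩ L^p(Ω)
    (φ : EuclideanSpace ℝ (Fin n) → ℝ)
    (hφLp : MemLp (fun x => gradient φ x) (ENNReal.ofReal p) (volume.restrict Ω))
    -- u₀ and the family u_ε, weakly differentiable with gradients in L²(Ω) ∩ L^p(Ω)
    (u₀ : EuclideanSpace ℝ (Fin n) → ℝ)
    (hu₀Lp : MemLp (fun x => gradient u₀ x) (ENNReal.ofReal p) (volume.restrict Ω))
    (u : ℝ → EuclideanSpace ℝ (Fin n) → ℝ)
    (huLp : ∀ ε ∈ Set.Ioo (0:ℝ) 1,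
      MemLp (fun x => gradient (u ε) x) (ENNReal.ofReal p) (volume.restrict Ω))
    -- uniform bound on the norms of the gradients
    (hbound : ∃ M : ℝ, ∀ ε ∈ Set.Ioo (0:ℝ) 1,
      (eLpNorm (fun x => gradient (u ε) x) 2 (volume.restrict Ω)).toReal +
        (eLpNorm (fun x => gradient (u ε) x) (ENNReal.ofReal p) (volume.restrict Ω)).toReal
        ≤ M)
    -- the two weak-formulation identities, for each ε ∈ (0,1)
    (hweak₁ : ∀ ε ∈ Set.Ioo (0:ℝ) 1,
      ∫ x in Ω, σ x ‖gradient (u ε) x‖ *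
        ⟪gradient (u ε) x, gradient (u ε) x - gradient u₀ x - ε • gradient φ x⟫ = 0)
    (hweak₀ : ∀ ε ∈ Set.Ioo (0:ℝ) 1,
      ∫ x in Ω, σ x ‖gradient u₀ x‖ *
        ⟪gradient u₀ x, gradient (u ε) x - gradient u₀ x - ε • gradient φ x⟫ = 0) :
    Tendsto (fun ε : ℝ =>
        eLpNorm (fun x => gradient (u ε) x - gradient u₀ x)
          (ENNReal.ofReal p) (volume.restrict Ω))
      (𝓝[Set.Ioo (0:ℝ) 1] 0) (𝓝 0) := by
  obtain ⟨M, hM⟩ := hbound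
  have hp₀ : 0 < p := by linarith
  have : IsFiniteMeasure (volume.restrict Ω) := isFiniteMeasure_restrict.2 hΩb.measure_lt_top.ne
  have hgrowth := ae_abs_mul_inner_le hp hσu.le hE₀ hc hupper hcoer
  set C := σu * (1 + E₀ ^ (2 - p))
  have hC : 0 ≤ C := by positivity
  set K := C * (2 * (volume.restrict Ω).real univ + M ^ p + (∫ x in Ω, ‖gradient u₀ x‖ ^ p)
    + 2 * ∫ x in Ω, ‖gradient φ x‖ ^ p)
  refine tendsto_eLpNorm_of_integral_norm_rpow_le (b := fun ε => ε * K / c) hp₀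
    (eventually_nhdsWithin_of_forall fun ε hε => (huLp ε hε).sub hu₀Lp)
    (eventually_nhdsWithin_of_forall fun ε hε => ?_) ?_
  · have hgM : ∫ x in Ω, ‖gradient (u ε) x‖ ^ p ≤ M ^ p :=
      (huLp ε hε).integral_norm_rpow_le hp₀
        ((le_add_of_nonneg_left ENNReal.toReal_nonneg).trans (hM ε hε))
    rw [le_div_iff₀ hc, mul_comm]
    calc _ ≤ _ := mul_integral_norm_sub_rpow_le_of_weak hσmeas hgrowth hp₀ hcoer (huLp ε hε)
          hu₀Lp hφLp hε.1.le (hweak₁ ε hε) (hweak₀ ε hε)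
      _ ≤ ε * K := mul_le_mul_of_nonneg_left (mul_le_mul_of_nonneg_left (by linarith) hC) hε.1.le
  · exact (((continuous_id.mul_const K).div_const c).tendsto' 0 0 (by simp)).mono_left
      nhdsWithin_le_nhds

/-- **Lemma 3.1** (continuity of the gradient of the solution with respect to perturbations
of the boundary datum): under the upper bound of (H4), the coercivity (H5), a uniform bound
on the norms of `∇u_ε`, and the weak-formulation identities, `∇u_ε → ∇u₀` in `L^p(Ω)`
as `ε → 0⁺`. -/
theorem gradient_continuity_wrt_boundary_data
    {n : ℕ} (Ω : Set (EuclideanSpace ℝ (Fin n)))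
    (hΩo : IsOpen Ω) (hΩb : Bornology.IsBounded Ω)
    (p : ℝ) (hp : 2 ≤ p)
    (σ : EuclideanSpace ℝ (Fin n) → ℝ → ℝ)
    (hσmeas : Measurable (Function.uncurry σ))
    -- upper bound in (H4)
    (σu E₀ : ℝ) (hσu : 0 < σu) (hE₀ : 0 < E₀)
    (hupper : ∀ᵐ x ∂(volume.restrict Ω), ∀ E > (0:ℝ),
      σ x E ≤ σu * max 1 ((E / E₀) ^ (p - 2)))
    -- coercivity (H5)
    (c : ℝ) (hc : 0 < c)
    (hcoer : ∀ᵐ x ∂(volume.restrict Ω), ∀ a b : EuclideanSpace ℝ (Fin n),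
      c * ‖b - a‖ ^ p ≤ ⟪σ x ‖b‖ • b - σ x ‖a‖ • a, b - a⟫)
    -- the direction φ, weakly differentiable with gradient in L²(Ω) ∩ L^p(Ω)
    (φ : EuclideanSpace ℝ (Fin n) → ℝ) (hφ : Differentiable ℝ φ)
    (hφL2 : MemLp (fun x => gradient φ x) 2 (volume.restrict Ω))
    (hφLp : MemLp (fun x => gradient φ x) (ENNReal.ofReal p) (volume.restrict Ω))
    -- u₀ and the family u_ε, weakly differentiable with gradients in L²(Ω) ∩ L^p(Ω)
    (u₀ : EuclideanSpace ℝ (Fin n) → ℝ) (hu₀ : Differentiable ℝ u₀)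
    (hu₀L2 : MemLp (fun x => gradient u₀ x) 2 (volume.restrict Ω))
    (hu₀Lp : MemLp (fun x => gradient u₀ x) (ENNReal.ofReal p) (volume.restrict Ω))
    (u : ℝ → EuclideanSpace ℝ (Fin n) → ℝ)
    (hu : ∀ ε ∈ Set.Ioo (0:ℝ) 1, Differentiable ℝ (u ε))
    (huL2 : ∀ ε ∈ Set.Ioo (0:ℝ) 1,
      MemLp (fun x => gradient (u ε) x) 2 (volume.restrict Ω))
    (huLp : ∀ ε ∈ Set.Ioo (0:ℝ) 1,
      MemLp (fun x => gradient (u ε) x) (ENNReal.ofReal p) (volume.restrict Ω))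
    -- uniform bound on the norms of the gradients
    (hbound : ∃ M : ℝ, ∀ ε ∈ Set.Ioo (0:ℝ) 1,
      (eLpNorm (fun x => gradient (u ε) x) 2 (volume.restrict Ω)).toReal +
        (eLpNorm (fun x => gradient (u ε) x) (ENNReal.ofReal p) (volume.restrict Ω)).toReal
        ≤ M)
    -- the two weak-formulation identities, for each ε ∈ (0,1)
    (hweak₁ : ∀ ε ∈ Set.Ioo (0:ℝ) 1,
      ∫ x in Ω, σ x ‖gradient (u ε) x‖ *
        ⟪gradient (u ε) x, gradient (u ε) x - gradient u₀ x - ε • gradient φ x⟫ = 0)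
    (hweak₀ : ∀ ε ∈ Set.Ioo (0:ℝ) 1,
      ∫ x in Ω, σ x ‖gradient u₀ x‖ *
        ⟪gradient u₀ x, gradient (u ε) x - gradient u₀ x - ε • gradient φ x⟫ = 0) :
    Tendsto (fun ε : ℝ =>
        eLpNorm (fun x => gradient (u ε) x - gradient u₀ x)
          (ENNReal.ofReal p) (volume.restrict Ω))
      (𝓝[Set.Ioo (0:ℝ) 1] 0) (𝓝 0) :=
  gradient_continuity_wrt_boundary_data_general Ω hΩb p hp σ hσmeas σu E₀ hσu hE₀ hupper c hc hcoer
    φ hφLp u₀ hu₀Lp u huLp hbound hweak₁ hweak₀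
end

section
/- Let Ω ⊆ ℝⁿ be an open bounded set, let p ≥ 2, and let σ₁, σ₂ : Ω × [0,∞) → ℝ satisfy (H1)–(H4) (same exponent p) with σ₁(x,E) ≤ σ₂(x,E) for a.e. x ∈ Ω and all E > 0. Let φ_f : ℝⁿ → ℝ be weakly differentiable with ∇φ_f ∈ L^p(Ω) (an extension of the boundary datum f), let A be a set of weakly differentiable functions with gradients in L^p(Ω), and for i = 1,2 and each α ∈ [0,1] let u_i^α minimize F_{σᵢ} over the translated class A_α := {v + α·φ_f : v ∈ A}. Define the power products P_i(α) := ∫_Ω σᵢ(x,|∇u_i^α(x)|) ∇u_i^α(x)·∇φ_f(x) dx. Assume (i) F_{σᵢ}(u_i^0) = 0 for i = 1,2; (ii) for each i the map g_i : α ↦ F_{σᵢ}(u_i^α) is differentiable at every α ∈ [0,1] with g_i'(α) = P_i(α), and P_i is interval-integrable on [0,1]. Then ∫₀¹ P₁(α) dα ≤ ∫₀¹ P₂(α) dα. (Theorem 4.3, Monotonicity Principle for the Average Dirichlet-to-Neumann operator: σ₁ ≤ σ₂ implies ⟨Λ̄_{σ₁}(f), f⟩ ≤ ⟨Λ̄_{σ₂}(f),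 f⟩, stated with the boundary pairings rewritten as interior integrals.) -/
open MeasureTheory Set
open scoped RealInnerProductSpace

/-- The Dirichlet energy density `Q_σ(x,E) = ∫₀^E σ(x,ξ)·ξ dξ`. -/
noncomputable def dirichletDensity {n : ℕ}
    (σ : EuclideanSpace ℝ (Fin n) → ℝ → ℝ) (x : EuclideanSpace ℝ (Fin n)) (E : ℝ) : ℝ :=
  ∫ ξ in (0:ℝ)..E, σ x ξ * ξ

/-- The Dirichlet energy `F_σ(u) = ∫_Ω Q_σ(x,|∇u(x)|) dx`. -/
noncomputable def dirichletEnergy {n : ℕ} (Ω : Set (EuclideanSpace ℝ (Fin n)))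
    (σ : EuclideanSpace ℝ (Fin n) → ℝ → ℝ) (u : EuclideanSpace ℝ (Fin n) → ℝ) : ℝ :=
  ∫ x in Ω, dirichletDensity σ x ‖gradient u x‖

/-- The power product `⟨Λ_σ(g), f⟩` written as an interior integral:
`∫_Ω σ(x,|∇u|) ∇u·∇φ_f dx`. -/
noncomputable def powerProduct {n : ℕ} (Ω : Set (EuclideanSpace ℝ (Fin n)))
    (σ : EuclideanSpace ℝ (Fin n) → ℝ → ℝ)
    (φf u : EuclideanSpace ℝ (Fin n) → ℝ) : ℝ :=
  ∫ x in Ω, σ x ‖gradient u x‖ * ⟪gradient u x, gradient φf x⟫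

open Filter Topology
open scoped ENNReal

/-!
Integrating (ii) over `[0,1]` and using (i) gives `∫₀¹ Pᵢ = F_{σᵢ}(uᵢ¹)`. Since `u₂¹` is admissible
for the `σ₁`-problem, `F_{σ₁}(u₁¹) ≤ F_{σ₁}(u₂¹) ≤ F_{σ₂}(u₂¹)`, the last step because `σ₁ ≤ σ₂`
orders the energy densities pointwise. For this comparison of Bochner integrals the density
`Q_{σ₂}(x, |∇u₂¹(x)|)` must be integrable: it is measurable by a Carathéodory argument (`σ₂` is
measurable in `x` and continuous in `E`), and (H4) dominates it by
`σ̄ (|∇u|² + |∇u|ᵖ / E₀ᵖ⁻²)`, which is integrable because `∇u ∈ Lᵖ` on a set of finite measure.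
-/

section Caratheodory

variable {X : Type*} [MeasurableSpace X] {μ : Measure X}

theorem exists_continuous_measurable_modification {σ : X → ℝ → ℝ}
    (hmeas : ∀ E, 0 ≤ E → AEMeasurable (fun x => σ x E) μ)
    (hcont : ∀ᵐ x ∂μ, ContinuousOn (σ x) (Ici 0)) :
    ∃ τ : X → ℝ → ℝ, (∀ x, Continuous (τ x)) ∧ (∀ E, Measurable fun x => τ x E) ∧
      ∀ᵐ x ∂μ, EqOn (τ x) (σ x) (Ici 0) := by
  classical
  choose G hGmeas hG using fun q : ℚ =>
    (⟨_, (hmeas (max q 0) (le_max_right _ _)).measurable_mk, (hmeas _ (le_max_right _ _)).ae_eq_mk⟩ :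
      ∃ G : X → ℝ, Measurable G ∧ (fun x => σ x (max q 0)) =ᵐ[μ] G)
  set N := toMeasurable μ
    ({x | ¬ContinuousOn (σ x) (Ici 0)} ∪ ⋃ q : ℚ, {x | σ x (max q 0) ≠ G q x})
  have hN : μ N = 0 := by
    rw [measure_toMeasurable]
    exact measure_union_null hcont (measure_iUnion_null hG)
  have hgood : ∀ x ∉ N, ContinuousOn (σ x) (Ici 0) ∧ ∀ q : ℚ, σ x (max q 0) = G q x := by
    intro x hx
    have := notMem_subset (subset_toMeasurable _ _) hx
    simp_all
  -- Off `N`, precomposing with `max · 0` makes `τ x` continuous on all of `ℝ`.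
  set τ : X → ℝ → ℝ := fun x E => if x ∈ N then 0 else σ x (max E 0)
  have hτcont : ∀ x, Continuous (τ x) := by
    intro x
    by_cases hx : x ∈ N
    · simpa [τ, hx] using continuous_const
    · simp only [τ, hx, if_false]
      exact (hgood x hx).1.comp_continuous (continuous_id.max continuous_const)
        fun E => le_max_right E 0
  have hτrat : ∀ q : ℚ, Measurable fun x => τ x q := by
    intro q
    have : (fun x => τ x q) = N.piecewise (fun _ => 0) (G q) := by
      ext x
      by_cases hx : x ∈ N
      · simp [τ, hx]
      · simp [τ, hx, (hgood x hx).2 q]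
    rw [this]
    exact measurable_const.piecewise (measurableSet_toMeasurable μ _) (hGmeas q)
  refine ⟨τ, hτcont, fun E => ?_, ?_⟩
  · obtain ⟨r, -, -, hr⟩ := Real.exists_seq_rat_strictMono_tendsto E
    exact measurable_of_tendsto_metrizable (fun k => hτrat (r k))
      (tendsto_pi_nhds.2 fun x => ((hτcont x).tendsto E).comp hr)
  · filter_upwards [measure_eq_zero_iff_ae_notMem.1 hN] with x hx E hE
    simp [τ, hx, max_eq_left (mem_Ici.1 hE)]

theorem measurable_intervalIntegral_mul_id {τ : X → ℝ → ℝ} (hcont : ∀ x, Continuous (τ x))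
    (hmeas : ∀ E, Measurable fun x => τ x E) :
    Measurable fun z : X × ℝ => ∫ ξ in (0:ℝ)..z.2, τ z.1 ξ * ξ := by
  have hjoint : StronglyMeasurable (Function.uncurry fun x ξ => τ x ξ * ξ) :=
    ((measurable_uncurry_of_continuous_of_measurable hcont hmeas).comp measurable_swap
      |>.mul measurable_snd).stronglyMeasurable
  have hprimitive : ∀ x, Continuous fun E => ∫ ξ in (0:ℝ)..E, τ x ξ * ξ := fun x =>
    intervalIntegral.continuous_primitive
      (fun a b => ((hcont x).mul continuous_id).intervalIntegrable a b) 0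
  have hlevel : ∀ E, Measurable fun x => ∫ ξ in (0:ℝ)..E, τ x ξ * ξ := fun E =>
    (hjoint.integral_prod_right.measurable).sub hjoint.integral_prod_right.measurable
  exact (measurable_uncurry_of_continuous_of_measurable hprimitive hlevel).comp measurable_swap

end Caratheodory

theorem intervalIntegrable_mul_id {s : ℝ → ℝ} {E : ℝ} (hs : ContinuousOn s (Ici 0)) (hE : 0 ≤ E) :
    IntervalIntegrable (fun ξ => s ξ * ξ) volume 0 E :=
  ((hs.mono Icc_subset_Ici_self).mul continuousOn_id).intervalIntegrable_of_Icc hE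

section Density

variable {n : ℕ} {σ σ₁ σ₂ : EuclideanSpace ℝ (Fin n) → ℝ → ℝ} {x : EuclideanSpace ℝ (Fin n)}
  {E : ℝ}

theorem aestronglyMeasurable_dirichletDensity_comp {μ : Measure (EuclideanSpace ℝ (Fin n))}
    (hmeas : ∀ E, 0 ≤ E → AEMeasurable (fun x => σ x E) μ)
    (hcont : ∀ᵐ x ∂μ, ContinuousOn (σ x) (Ici 0))
    {g : EuclideanSpace ℝ (Fin n) → ℝ} (hg : AEMeasurable g μ) (hg0 : ∀ᵐ x ∂μ, 0 ≤ g x) :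
    AEStronglyMeasurable (fun x => dirichletDensity σ x (g x)) μ := by
  obtain ⟨τ, hτcont, hτmeas, hτσ⟩ := exists_continuous_measurable_modification hmeas hcont
  refine ((measurable_intervalIntegral_mul_id hτcont hτmeas).comp_aemeasurable
    (aemeasurable_id.prodMk hg)).aestronglyMeasurable.congr ?_
  filter_upwards [hτσ, hg0] with x hx hgx
  refine intervalIntegral.integral_congr fun ξ hξ => ?_
  rw [uIcc_of_le hgx] at hξ
  exact congrArg (· * ξ) (hx hξ.1)

theorem dirichletDensity_nonneg (hσ : ∀ ξ > 0, 0 ≤ σ x ξ) (hE : 0 ≤ E) :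
    0 ≤ dirichletDensity σ x E :=
  intervalIntegral.integral_nonneg hE fun ξ hξ =>
    hξ.1.eq_or_lt.elim (fun h => by simp [← h]) fun h => mul_nonneg (hσ ξ h) h.le

theorem dirichletDensity_le_dirichletDensity (hσ₁ : ContinuousOn (σ₁ x) (Ici 0))
    (hσ₂ : ContinuousOn (σ₂ x) (Ici 0)) (hle : ∀ ξ > 0, σ₁ x ξ ≤ σ₂ x ξ) (hE : 0 ≤ E) :
    dirichletDensity σ₁ x E ≤ dirichletDensity σ₂ x E := by
  refine intervalIntegral.integral_mono_on hE (intervalIntegrable_mul_id hσ₁ hE)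
    (intervalIntegrable_mul_id hσ₂ hE) fun ξ hξ => ?_
  rcases hξ.1.eq_or_lt with h | h
  · simp [← h]
  · exact mul_le_mul_of_nonneg_right (hle ξ h) h.le

theorem dirichletDensity_le_mul_sq {M : ℝ} (hσ : ContinuousOn (σ x) (Ici 0)) (hM : 0 ≤ M)
    (hbound : ∀ ξ ∈ Ioc 0 E, σ x ξ ≤ M) (hE : 0 ≤ E) :
    dirichletDensity σ x E ≤ M * E ^ 2 := by
  calc dirichletDensity σ x E ≤ ∫ _ in (0:ℝ)..E, M * E :=
        intervalIntegral.integral_mono_on hE (intervalIntegrable_mul_id hσ hE)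
          intervalIntegrable_const fun ξ hξ => by
          rcases hξ.1.eq_or_lt with h | h
          · simp [← h, mul_nonneg hM hE]
          · exact (mul_le_mul_of_nonneg_right (hbound ξ ⟨h, hξ.2⟩) h.le).trans
              (mul_le_mul_of_nonneg_left hξ.2 hM)
    _ = M * E ^ 2 := by rw [intervalIntegral.integral_const, smul_eq_mul]; ring

end Density

theorem div_rpow_sub_two_mul_sq {E E₀ p : ℝ} (hE : 0 ≤ E) (hE₀ : 0 ≤ E₀) (hp : p ≠ 0) :
    (E / E₀) ^ (p - 2) * E ^ 2 = E ^ p / E₀ ^ (p - 2) := by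
  rcases hE.eq_or_lt with rfl | hE
  · simp [Real.zero_rpow hp]
  · rw [Real.div_rpow hE.le hE₀, div_mul_eq_mul_div, ← Real.rpow_natCast, ← Real.rpow_add hE]
    norm_num

section Growth

variable {n : ℕ} {σ σ₁ σ₂ : EuclideanSpace ℝ (Fin n) → ℝ → ℝ} {p σu E₀ : ℝ}

theorem dirichletDensity_le_of_growth {x : EuclideanSpace ℝ (Fin n)} {E : ℝ} (hp : 2 ≤ p)
    (hσu : 0 ≤ σu) (hE₀ : 0 < E₀) (hσ : ContinuousOn (σ x) (Ici 0))
    (hgrowth : ∀ ξ > 0, σ x ξ ≤ σu * max 1 ((ξ / E₀) ^ (p - 2))) (hE : 0 ≤ E) :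
    dirichletDensity σ x E ≤ σu * (E ^ 2 + E ^ p / E₀ ^ (p - 2)) := by
  set t := (E / E₀) ^ (p - 2)
  have ht : 0 ≤ t := Real.rpow_nonneg (div_nonneg hE hE₀.le) _
  calc dirichletDensity σ x E ≤ σu * max 1 t * E ^ 2 := by
        refine dirichletDensity_le_mul_sq hσ (by positivity) (fun ξ hξ => ?_) hE
        refine (hgrowth ξ hξ.1).trans ?_
        gcongr
        exact Real.rpow_le_rpow (div_nonneg hξ.1.le hE₀.le)
          (div_le_div_of_nonneg_right hξ.2 hE₀.le) (by linarith)
    _ ≤ σu * (1 + t) * E ^ 2 := by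
        gcongr
        exact max_le (le_add_of_nonneg_right ht) (le_add_of_nonneg_left zero_le_one)
    _ = σu * (E ^ 2 + E ^ p / E₀ ^ (p - 2)) := by
        rw [← div_rpow_sub_two_mul_sq hE hE₀.le (by linarith)]
        ring

theorem integrable_dirichletDensity_norm_gradient {μ : Measure (EuclideanSpace ℝ (Fin n))}
    [IsFiniteMeasure μ] (hp : 2 ≤ p) (hσu : 0 ≤ σu) (hE₀ : 0 < E₀)
    (hmeas : ∀ E, 0 ≤ E → AEMeasurable (fun x => σ x E) μ)
    (hcont : ∀ᵐ x ∂μ, ContinuousOn (σ x) (Ici 0))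
    (hnonneg : ∀ᵐ x ∂μ, ∀ E > 0, 0 ≤ σ x E)
    (hgrowth : ∀ᵐ x ∂μ, ∀ E > 0, σ x E ≤ σu * max 1 ((E / E₀) ^ (p - 2)))
    {u : EuclideanSpace ℝ (Fin n) → ℝ} (hu : MemLp (gradient u) (ENNReal.ofReal p) μ) :
    Integrable (fun x => dirichletDensity σ x ‖gradient u x‖) μ := by
  have hsq : Integrable (fun x => ‖gradient u x‖ ^ 2) μ := by
    simpa using (hu.mono_exponent (ENNReal.ofReal_le_ofReal hp)).integrable_norm_rpow'
  have hpow : Integrable (fun x => ‖gradient u x‖ ^ p) μ := by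
    simpa [ENNReal.toReal_ofReal (by linarith : 0 ≤ p)] using hu.integrable_norm_rpow'
  refine Integrable.mono'
    (g := fun x => σu * (‖gradient u x‖ ^ 2 + ‖gradient u x‖ ^ p / E₀ ^ (p - 2)))
    ((hsq.add (hpow.div_const _)).const_mul σu)
    (aestronglyMeasurable_dirichletDensity_comp hmeas hcont hu.1.norm.aemeasurable
      (ae_of_all _ fun _ => norm_nonneg _)) ?_
  filter_upwards [hcont, hnonneg, hgrowth] with x hc h0 hg
  rw [Real.norm_of_nonneg (dirichletDensity_nonneg h0 (norm_nonneg _))]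
  exact dirichletDensity_le_of_growth hp hσu hE₀ hc hg (norm_nonneg _)

theorem dirichletEnergy_le_dirichletEnergy {Ω : Set (EuclideanSpace ℝ (Fin n))}
    (hΩ : volume Ω < ∞) (hp : 2 ≤ p)
    (hσ₂meas : ∀ E, 0 ≤ E → AEMeasurable (fun x => σ₂ x E) (volume.restrict Ω))
    (hσ₁cont : ∀ᵐ x ∂(volume.restrict Ω), ContinuousOn (σ₁ x) (Ici 0))
    (hσ₂cont : ∀ᵐ x ∂(volume.restrict Ω), ContinuousOn (σ₂ x) (Ici 0))
    (hσ₁nonneg : ∀ᵐ x ∂(volume.restrict Ω), ∀ E > 0, 0 ≤ σ₁ x E)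
    (hle : ∀ᵐ x ∂(volume.restrict Ω), ∀ E > 0, σ₁ x E ≤ σ₂ x E)
    (hσu : 0 ≤ σu) (hE₀ : 0 < E₀)
    (hσ₂growth : ∀ᵐ x ∂(volume.restrict Ω), ∀ E > 0, σ₂ x E ≤ σu * max 1 ((E / E₀) ^ (p - 2)))
    {u : EuclideanSpace ℝ (Fin n) → ℝ}
    (hu : MemLp (gradient u) (ENNReal.ofReal p) (volume.restrict Ω)) :
    dirichletEnergy Ω σ₁ u ≤ dirichletEnergy Ω σ₂ u := by
  have : IsFiniteMeasure (volume.restrict Ω) := isFiniteMeasure_restrict.2 hΩ.ne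
  have hσ₂nonneg : ∀ᵐ x ∂(volume.restrict Ω), ∀ E > 0, 0 ≤ σ₂ x E := by
    filter_upwards [hσ₁nonneg, hle] with x h0 hl E hE using (h0 E hE).trans (hl E hE)
  refine integral_mono_of_nonneg ?_ (integrable_dirichletDensity_norm_gradient hp hσu hE₀
    hσ₂meas hσ₂cont hσ₂nonneg hσ₂growth hu) ?_
  · filter_upwards [hσ₁nonneg] with x h0 using dirichletDensity_nonneg h0 (norm_nonneg _)
  · filter_upwards [hσ₁cont, hσ₂cont, hle] with x hc₁ hc₂ hl
      using dirichletDensity_le_dirichletDensity hc₁ hc₂ hl (norm_nonneg _)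

end Growth

section Gradient

variable {F : Type*} [NormedAddCommGroup F] [InnerProductSpace ℝ F] [CompleteSpace F]
  {v φ : F → ℝ}

theorem gradient_add_const_mul {x : F} (hv : DifferentiableAt ℝ v x)
    (hφ : DifferentiableAt ℝ φ x) (c : ℝ) :
    gradient (fun y => v y + c * φ y) x = gradient v x + c • gradient φ x := by
  simp only [gradient, fderiv_fun_add hv (hφ.const_mul c), fderiv_const_mul hφ, map_add, map_smul]

theorem MemLp.gradient_add_const_mul [MeasurableSpace F] {μ : Measure F} {q : ℝ≥0∞}
    (hv : Differentiable ℝ v) (hφ : Differentiable ℝ φ) (hvq : MemLp (gradient v) q μ)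
    (hφq : MemLp (gradient φ) q μ) (c : ℝ) :
    MemLp (gradient fun y => v y + c * φ y) q μ := by
  rw [show (gradient fun y => v y + c * φ y) = gradient v + c • gradient φ from
    funext fun x => _root_.gradient_add_const_mul (hv x) (hφ x) c]
  exact hvq.add (hφq.const_smul c)

end Gradient

theorem monotonicity_average_DtN_general
    {n : ℕ} (Ω : Set (EuclideanSpace ℝ (Fin n)))
    (hΩb : Bornology.IsBounded Ω)
    (p : ℝ) (hp : 2 ≤ p)
    (σ₁ σ₂ : EuclideanSpace ℝ (Fin n) → ℝ → ℝ)
    -- (H1)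
    (hσ₂meas : ∀ E : ℝ, 0 ≤ E → AEMeasurable (fun x => σ₂ x E) (volume.restrict Ω))
    -- (H3)
    (hσ₁cont : ∀ᵐ x ∂(volume.restrict Ω), ContinuousOn (fun E => σ₁ x E) (Set.Ici 0))
    (hσ₂cont : ∀ᵐ x ∂(volume.restrict Ω), ContinuousOn (fun E => σ₂ x E) (Set.Ici 0))
    -- (H4)
    (hσ₁growth : ∃ σl σu E₀ : ℝ, 0 < σl ∧ σl ≤ σu ∧ 0 < E₀ ∧
      ∀ᵐ x ∂(volume.restrict Ω), ∀ E > (0:ℝ),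
        σl * (E / E₀) ^ (p - 2) ≤ σ₁ x E ∧ σ₁ x E ≤ σu * max 1 ((E / E₀) ^ (p - 2)))
    (hσ₂growth : ∃ σl σu E₀ : ℝ, 0 < σl ∧ σl ≤ σu ∧ 0 < E₀ ∧
      ∀ᵐ x ∂(volume.restrict Ω), ∀ E > (0:ℝ),
        σl * (E / E₀) ^ (p - 2) ≤ σ₂ x E ∧ σ₂ x E ≤ σu * max 1 ((E / E₀) ^ (p - 2)))
    -- σ₁ ≤ σ₂
    (hle : ∀ᵐ x ∂(volume.restrict Ω), ∀ E > (0:ℝ), σ₁ x E ≤ σ₂ x E)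
    -- the extension φ_f of the boundary datum f
    (φf : EuclideanSpace ℝ (Fin n) → ℝ) (hφf : Differentiable ℝ φf)
    (hφfLp : MemLp (fun x => gradient φf x) (ENNReal.ofReal p) (volume.restrict Ω))
    -- the admissible class
    (A : Set (EuclideanSpace ℝ (Fin n) → ℝ))
    (hA : ∀ v ∈ A, Differentiable ℝ v ∧
      MemLp (fun x => gradient v x) (ENNReal.ofReal p) (volume.restrict Ω))
    -- for each α ∈ [0,1], u_i^α minimizes F_{σ_i} over A_α = {v + α·φ_f : v ∈ A}
    (u₁ u₂ : ℝ → EuclideanSpace ℝ (Fin n) → ℝ)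
    (hmin₁ : ∀ α ∈ Set.Icc (0:ℝ) 1,
      (∃ v ∈ A, u₁ α = fun x => v x + α * φf x) ∧
      ∀ w, (∃ v ∈ A, w = fun x => v x + α * φf x) →
        dirichletEnergy Ω σ₁ (u₁ α) ≤ dirichletEnergy Ω σ₁ w)
    (hmin₂ : ∀ α ∈ Set.Icc (0:ℝ) 1,
      (∃ v ∈ A, u₂ α = fun x => v x + α * φf x) ∧
      ∀ w, (∃ v ∈ A, w = fun x => v x + α * φf x) →
        dirichletEnergy Ω σ₂ (u₂ α) ≤ dirichletEnergy Ω σ₂ w)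
    -- (i) the energy vanishes at α = 0
    (hF0₁ : dirichletEnergy Ω σ₁ (u₁ 0) = 0)
    (hF0₂ : dirichletEnergy Ω σ₂ (u₂ 0) = 0)
    -- (ii) g_i(α) = F_{σᵢ}(u_i^α) is differentiable with derivative P_i(α)
    (hg₁ : ∀ α ∈ Set.Icc (0:ℝ) 1,
      HasDerivAt (fun β => dirichletEnergy Ω σ₁ (u₁ β)) (powerProduct Ω σ₁ φf (u₁ α)) α)
    (hg₂ : ∀ α ∈ Set.Icc (0:ℝ) 1,
      HasDerivAt (fun β => dirichletEnergy Ω σ₂ (u₂ β)) (powerProduct Ω σ₂ φf (u₂ α)) α)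
    -- P_i interval-integrable on [0,1]
    (hint₁ : IntervalIntegrable (fun α => powerProduct Ω σ₁ φf (u₁ α)) volume 0 1)
    (hint₂ : IntervalIntegrable (fun α => powerProduct Ω σ₂ φf (u₂ α)) volume 0 1) :
    (∫ α in (0:ℝ)..1, powerProduct Ω σ₁ φf (u₁ α))
      ≤ ∫ α in (0:ℝ)..1, powerProduct Ω σ₂ φf (u₂ α) := by
  have h1 : (1:ℝ) ∈ Icc (0:ℝ) 1 := right_mem_Icc.2 zero_le_one
  have hIcc : uIcc (0:ℝ) 1 = Icc 0 1 := uIcc_of_le zero_le_one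
  rw [intervalIntegral.integral_eq_sub_of_hasDerivAt (fun α hα => hg₁ α (hIcc ▸ hα)) hint₁,
    intervalIntegral.integral_eq_sub_of_hasDerivAt (fun α hα => hg₂ α (hIcc ▸ hα)) hint₂,
    hF0₁, hF0₂, sub_zero, sub_zero]
  obtain ⟨⟨v, hvA, hv⟩, -⟩ := hmin₂ 1 h1
  have hu₂ : MemLp (gradient (u₂ 1)) (ENNReal.ofReal p) (volume.restrict Ω) := by
    rw [hv]
    exact MemLp.gradient_add_const_mul (hA v hvA).1 hφf (hA v hvA).2 hφfLp 1
  obtain ⟨σl₁, σu₁, E₁, hσl₁, -, hE₁, hgrowth₁⟩ := hσ₁growth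
  obtain ⟨σl₂, σu₂, E₂, hσl₂, hσlu₂, hE₂, hgrowth₂⟩ := hσ₂growth
  have hσ₁nonneg : ∀ᵐ x ∂(volume.restrict Ω), ∀ E > 0, 0 ≤ σ₁ x E :=
    hgrowth₁.mono fun x hx E hE =>
      (mul_nonneg hσl₁.le (Real.rpow_nonneg (div_nonneg hE.le hE₁.le) _)).trans (hx E hE).1
  calc dirichletEnergy Ω σ₁ (u₁ 1) ≤ dirichletEnergy Ω σ₁ (u₂ 1) :=
        (hmin₁ 1 h1).2 _ ⟨v, hvA, hv⟩
    _ ≤ dirichletEnergy Ω σ₂ (u₂ 1) :=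
        dirichletEnergy_le_dirichletEnergy hΩb.measure_lt_top hp hσ₂meas hσ₁cont hσ₂cont
          hσ₁nonneg hle (hσl₂.le.trans hσlu₂) hE₂ (hgrowth₂.mono fun x hx E hE => (hx E hE).2) hu₂

/-- **Monotonicity Principle for the Average Dirichlet-to-Neumann operator**
(Theorem 4.3): `σ₁ ≤ σ₂` implies `⟨Λ̄_{σ₁}(f), f⟩ ≤ ⟨Λ̄_{σ₂}(f), f⟩`, i.e.
`∫₀¹ P₁(α) dα ≤ ∫₀¹ P₂(α) dα`. -/
theorem monotonicity_average_DtN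
    {n : ℕ} (Ω : Set (EuclideanSpace ℝ (Fin n)))
    (hΩo : IsOpen Ω) (hΩb : Bornology.IsBounded Ω)
    (p : ℝ) (hp : 2 ≤ p)
    (σ₁ σ₂ : EuclideanSpace ℝ (Fin n) → ℝ → ℝ)
    -- (H1)
    (hσ₁meas : ∀ E : ℝ, 0 ≤ E → AEMeasurable (fun x => σ₁ x E) (volume.restrict Ω))
    (hσ₂meas : ∀ E : ℝ, 0 ≤ E → AEMeasurable (fun x => σ₂ x E) (volume.restrict Ω))
    -- (H2)
    (hσ₁mono : ∀ᵐ x ∂(volume.restrict Ω), StrictMonoOn (fun E => σ₁ x E * E) (Set.Ioi 0))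
    (hσ₂mono : ∀ᵐ x ∂(volume.restrict Ω), StrictMonoOn (fun E => σ₂ x E * E) (Set.Ioi 0))
    -- (H3)
    (hσ₁cont : ∀ᵐ x ∂(volume.restrict Ω), ContinuousOn (fun E => σ₁ x E) (Set.Ici 0))
    (hσ₂cont : ∀ᵐ x ∂(volume.restrict Ω), ContinuousOn (fun E => σ₂ x E) (Set.Ici 0))
    -- (H4)
    (hσ₁growth : ∃ σl σu E₀ : ℝ, 0 < σl ∧ σl ≤ σu ∧ 0 < E₀ ∧
      ∀ᵐ x ∂(volume.restrict Ω), ∀ E > (0:ℝ),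
        σl * (E / E₀) ^ (p - 2) ≤ σ₁ x E ∧ σ₁ x E ≤ σu * max 1 ((E / E₀) ^ (p - 2)))
    (hσ₂growth : ∃ σl σu E₀ : ℝ, 0 < σl ∧ σl ≤ σu ∧ 0 < E₀ ∧
      ∀ᵐ x ∂(volume.restrict Ω), ∀ E > (0:ℝ),
        σl * (E / E₀) ^ (p - 2) ≤ σ₂ x E ∧ σ₂ x E ≤ σu * max 1 ((E / E₀) ^ (p - 2)))
    -- σ₁ ≤ σ₂
    (hle : ∀ᵐ x ∂(volume.restrict Ω), ∀ E > (0:ℝ), σ₁ x E ≤ σ₂ x E)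
    -- the extension φ_f of the boundary datum f
    (φf : EuclideanSpace ℝ (Fin n) → ℝ) (hφf : Differentiable ℝ φf)
    (hφfLp : MemLp (fun x => gradient φf x) (ENNReal.ofReal p) (volume.restrict Ω))
    -- the admissible class
    (A : Set (EuclideanSpace ℝ (Fin n) → ℝ))
    (hA : ∀ v ∈ A, Differentiable ℝ v ∧
      MemLp (fun x => gradient v x) (ENNReal.ofReal p) (volume.restrict Ω))
    -- for each α ∈ [0,1], u_i^α minimizes F_{σ_i} over A_α = {v + α·φ_f : v ∈ A}
    (u₁ u₂ : ℝ → EuclideanSpace ℝ (Fin n) → ℝ)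
    (hmin₁ : ∀ α ∈ Set.Icc (0:ℝ) 1,
      (∃ v ∈ A, u₁ α = fun x => v x + α * φf x) ∧
      ∀ w, (∃ v ∈ A, w = fun x => v x + α * φf x) →
        dirichletEnergy Ω σ₁ (u₁ α) ≤ dirichletEnergy Ω σ₁ w)
    (hmin₂ : ∀ α ∈ Set.Icc (0:ℝ) 1,
      (∃ v ∈ A, u₂ α = fun x => v x + α * φf x) ∧
      ∀ w, (∃ v ∈ A, w = fun x => v x + α * φf x) →
        dirichletEnergy Ω σ₂ (u₂ α) ≤ dirichletEnergy Ω σ₂ w)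
    -- (i) the energy vanishes at α = 0
    (hF0₁ : dirichletEnergy Ω σ₁ (u₁ 0) = 0)
    (hF0₂ : dirichletEnergy Ω σ₂ (u₂ 0) = 0)
    -- (ii) g_i(α) = F_{σᵢ}(u_i^α) is differentiable with derivative P_i(α)
    (hg₁ : ∀ α ∈ Set.Icc (0:ℝ) 1,
      HasDerivAt (fun β => dirichletEnergy Ω σ₁ (u₁ β)) (powerProduct Ω σ₁ φf (u₁ α)) α)
    (hg₂ : ∀ α ∈ Set.Icc (0:ℝ) 1,
      HasDerivAt (fun β => dirichletEnergy Ω σ₂ (u₂ β)) (powerProduct Ω σ₂ φf (u₂ α)) α)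
    -- P_i interval-integrable on [0,1]
    (hint₁ : IntervalIntegrable (fun α => powerProduct Ω σ₁ φf (u₁ α)) volume 0 1)
    (hint₂ : IntervalIntegrable (fun α => powerProduct Ω σ₂ φf (u₂ α)) volume 0 1) :
    (∫ α in (0:ℝ)..1, powerProduct Ω σ₁ φf (u₁ α))
      ≤ ∫ α in (0:ℝ)..1, powerProduct Ω σ₂ φf (u₂ α) :=
  monotonicity_average_DtN_general Ω hΩb p hp σ₁ σ₂ hσ₂meas hσ₁cont hσ₂cont hσ₁growth hσ₂growth hle
    φf hφf hφfLp A hA u₁ u₂ hmin₁ hmin₂ hF0₁ hF0₂ hg₁ hg₂ hint₁ hint₂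
end
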